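/- Let G be a planar simple graph on k ≥ 3 vertices and let {u,v} be an edge of G. Then the number of paths of length three (paths with 4 vertices and 3 edges) in G from u to v is at most 2(k − 3). -/

import Mathlib

open SimpleGraph

/-- `H` is a minor of `G`: there is a family of nonempty, connected, pairwise disjoint
branch sets in `G`, one for each vertex of `H`, with an edge of `G` between the branch
sets of any two adjacent vertices of `H`. -/
def SimpleGraph.IsMinor {W V : Type*} (H : SimpleGraph W) (G : SimpleGraph V) : Prop :=
  ∃ f : W → Set V,
    (∀ w, (f w).Nonempty) ∧
    (∀ w, (G.induce (f w)).Connected) ∧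
    (Pairwise fun w₁ w₂ => Disjoint (f w₁) (f w₂)) ∧
    ∀ ⦃w₁ w₂⦄, H.Adj w₁ w₂ → ∃ u ∈ f w₁, ∃ v ∈ f w₂, G.Adj u v

/-- A simple graph is planar iff (by Wagner's theorem) it has neither `K₅` nor `K₃,₃`
as a minor. -/
def SimpleGraph.IsPlanar {V : Type*} (G : SimpleGraph V) : Prop :=
  ¬ (completeGraph (Fin 5)).IsMinor G ∧
    ¬ (completeBipartiteGraph (Fin 3) (Fin 3)).IsMinor G

/-!
Let `S` be the set of non-isolated vertices other than `u, v` and `P` the set of paths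
`u x y v`. For `K₅`-minor-free `G` we show `|P| ≤ 2 (|S| - 1)` by induction on `|S|`.
If some `w ∈ S` lies on at most two paths, remove its edges. Otherwise every `w ∈ S` is
adjacent to `u` or `v`. If two common neighbours `w, w'` of `u` and `v` are adjacent, either
some common neighbour `z` of `w, w'` is adjacent to `u` or `v`, and `u, v, w, w', z` (with `v`
possibly extended by a neighbour of `z`) span a `K₅` minor, or contracting `ww'` destroys only
the two paths `u w w' v` and `u w' w v`. If no two common neighbours are adjacent, every vertex
of `S` has at least three neighbours in `G - {u, v}`, so `G - {u, v}` has a `K₄` minor, and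
the branch set `{u, v}` extends it to a `K₅` minor.

Minimum degree three forces a `K₄` minor: contract edges lying in no triangle; once every edge
lies in a triangle, a triangle `abc` minimising the component of `c` in `G - {a, b}` yields the
four branch sets.
-/

namespace SimpleGraph

variable {V W : Type*}

section Minor

structure IsMinorModel (H : SimpleGraph W) (G : SimpleGraph V) (f : W → Set V) : Prop where
  nonempty : ∀ w, (f w).Nonempty
  connected : ∀ w, (G.induce (f w)).Connected
  disjoint : Pairwise fun w₁ w₂ => Disjoint (f w₁) (f w₂)
  adj : ∀ ⦃w₁ w₂⦄, H.Adj w₁ w₂ → ∃ a ∈ f w₁, ∃ b ∈ f w₂, G.Adj a b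

variable {H : SimpleGraph W} {G G' : SimpleGraph V} {f : W → Set V}

theorem isMinor_iff_exists_isMinorModel : H.IsMinor G ↔ ∃ f, IsMinorModel H G f :=
  ⟨fun ⟨f, h₁, h₂, h₃, h₄⟩ => ⟨f, h₁, h₂, h₃, h₄⟩, fun ⟨f, h⟩ => ⟨f, h.1, h.2, h.3, h.4⟩⟩

theorem exists_completeGraph_adj [Nontrivial W] (w : W) : ∃ w', (completeGraph W).Adj w w' :=
  (exists_ne w).imp fun _ => Ne.symm

theorem connected_induce_singleton (G : SimpleGraph V) (a : V) : (G.induce {a}).Connected :=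
  ⟨.of_subsingleton⟩

theorem eq_of_connected_induce_of_forall_not_adj {s : Set V} {x y : V} (hs : (G.induce s).Connected)
    (hx : x ∈ s) (hy : y ∈ s) (hiso : ∀ b, ¬ G.Adj x b) : y = x := by
  obtain ⟨p⟩ := hs.preconnected ⟨x, hx⟩ ⟨y, hy⟩
  cases p with
  | nil => rfl
  | cons h _ => exact absurd h (hiso _)

namespace IsMinorModel

theorem mono (hf : IsMinorModel H G f) (hle : G ≤ G') : IsMinorModel H G' f where
  nonempty := hf.nonempty
  connected w := (hf.connected w).mono fun _ _ h => hle h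
  disjoint := hf.disjoint
  adj _ _ h := let ⟨a, ha, b, hb, hab⟩ := hf.adj h; ⟨a, ha, b, hb, hle hab⟩

theorem notMem_of_forall_not_adj (hf : IsMinorModel H G f) (hH : ∀ w, ∃ w', H.Adj w w')
    {x : V} (hiso : ∀ b, ¬ G.Adj x b) (w : W) : x ∉ f w := by
  intro hx
  obtain ⟨w', hw'⟩ := hH w
  obtain ⟨a, ha, b, -, hab⟩ := hf.adj hw'
  rw [eq_of_connected_induce_of_forall_not_adj (hf.connected w) hx ha hiso] at hab
  exact hiso b hab

theorem cons {n : ℕ} {f : Fin n → Set V} (hf : IsMinorModel (completeGraph (Fin n)) G f)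
    {B : Set V} (hB : B.Nonempty) (hBc : (G.induce B).Connected)
    (hdisj : ∀ i, Disjoint B (f i)) (hadj : ∀ i, ∃ b ∈ B, ∃ a ∈ f i, G.Adj b a) :
    IsMinorModel (completeGraph (Fin (n + 1))) G (Fin.cons B f) where
  nonempty := Fin.cases hB hf.nonempty
  connected := Fin.cases hBc hf.connected
  disjoint i j hij := by
    cases i using Fin.cases <;> cases j using Fin.cases
    · exact absurd rfl hij
    · exact hdisj _
    · exact (hdisj _).symm
    · exact hf.disjoint fun h => hij (congrArg Fin.succ h)
  adj i j hij := by
    cases i using Fin.cases <;> cases j using Fin.cases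
    · exact absurd rfl hij
    · exact hadj _
    · obtain ⟨b, hb, a, ha, hba⟩ := hadj _
      exact ⟨a, ha, b, hb, hba.symm⟩
    · exact hf.adj fun h => hij (congrArg Fin.succ h)

end IsMinorModel

theorem IsMinor.mono (h : H.IsMinor G) (hle : G ≤ G') : H.IsMinor G' :=
  let ⟨_, hf⟩ := isMinor_iff_exists_isMinorModel.1 h
  isMinor_iff_exists_isMinorModel.2 ⟨_, hf.mono hle⟩

theorem isMinorModel_singleton {n : ℕ} {g : Fin n → V}
    (hg : Pairwise fun i j => G.Adj (g i) (g j)) :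
    IsMinorModel (completeGraph (Fin n)) G fun i => {g i} where
  nonempty _ := Set.singleton_nonempty _
  connected _ := G.connected_induce_singleton _
  disjoint _ _ hij := Set.disjoint_singleton.2 (hg hij).ne
  adj _ _ hij := ⟨_, rfl, _, rfl, hg hij⟩

theorem completeGraph_succ_isMinor {n : ℕ} {g : Fin n → V}
    (hg : Pairwise fun i j => G.Adj (g i) (g j)) {B : Set V} (hB : B.Nonempty)
    (hBc : (G.induce B).Connected) (hgB : ∀ i, g i ∉ B) (hadj : ∀ i, ∃ b ∈ B, G.Adj b (g i)) :
    (completeGraph (Fin (n + 1))).IsMinor G :=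
  isMinor_iff_exists_isMinorModel.2 ⟨_, (isMinorModel_singleton hg).cons hB hBc
    (fun i => Set.disjoint_singleton_right.2 (hgB i))
    fun i => let ⟨b, hb, h⟩ := hadj i; ⟨b, hb, g i, rfl, h⟩⟩

end Minor

section Components

/-- `G - X`, keeping the vertices of `X` as isolated vertices so that it lives on `V`. -/
def isolateVerts (G : SimpleGraph V) (X : Set V) : SimpleGraph V where
  Adj a b := G.Adj a b ∧ a ∉ X ∧ b ∉ X
  symm := ⟨fun _ _ h => ⟨h.1.symm, h.2.2, h.2.1⟩⟩
  loopless := ⟨fun _ h => h.1.ne rfl⟩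

variable {G : SimpleGraph V} {X Y : Set V} {x y : V}

@[simp]
theorem isolateVerts_adj {a b : V} : (G.isolateVerts X).Adj a b ↔ G.Adj a b ∧ a ∉ X ∧ b ∉ X :=
  Iff.rfl

theorem isolateVerts_le : G.isolateVerts X ≤ G := fun _ _ h => h.1

/-- The component of `x` in `G - X` (junk value `{x}` when `x ∈ X`). -/
def compAvoiding (G : SimpleGraph V) (X : Set V) (x : V) : Set V :=
  ((G.isolateVerts X).connectedComponentMk x).supp

theorem mem_compAvoiding_self : x ∈ G.compAvoiding X x :=
  ConnectedComponent.connectedComponentMk_mem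

theorem disjoint_compAvoiding (hx : x ∉ X) : Disjoint (G.compAvoiding X x) X := by
  refine Set.disjoint_left.2 fun y hy hyX => ?_
  obtain rfl | hne := eq_or_ne y x
  · exact hx hyX
  obtain ⟨z, hz⟩ := mem_support_of_reachable hne (ConnectedComponent.exact hy)
  exact hz.2.1 hyX

theorem connected_induce_compAvoiding : (G.induce (G.compAvoiding X x)).Connected :=
  (ConnectedComponent.connected_toSimpleGraph ((G.isolateVerts X).connectedComponentMk x)).mono
    fun _ _ h => isolateVerts_le h

theorem mem_compAvoiding_of_adj {z : V} (hy : y ∈ G.compAvoiding X x) (h : G.Adj y z)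
    (hyX : y ∉ X) (hzX : z ∉ X) : z ∈ G.compAvoiding X x :=
  ConnectedComponent.mem_supp_of_adj_mem_supp _ hy ⟨h, hyX, hzX⟩

theorem compAvoiding_eq_of_adj (h : (G.isolateVerts X).Adj x y) :
    G.compAvoiding X x = G.compAvoiding X y := by
  rw [compAvoiding, compAvoiding, ConnectedComponent.connectedComponentMk_eq_of_adj h]

theorem subset_compAvoiding {s : Set V} (hs : (G.induce s).Connected) (hsX : Disjoint s X)
    (hx : x ∈ s) : s ⊆ G.compAvoiding X x := fun y hy =>
  ConnectedComponent.sound <| Reachable.symm <| (hs.preconnected ⟨x, hx⟩ ⟨y, hy⟩).map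
    (⟨Subtype.val, fun {a b} h => ⟨h, Set.disjoint_left.1 hsX a.2, Set.disjoint_left.1 hsX b.2⟩⟩ :
      G.induce s →g G.isolateVerts X)

theorem compAvoiding_subset {K : Set V} (hx : x ∈ K)
    (hK : ∀ a ∈ K, ∀ b, (G.isolateVerts X).Adj a b → b ∈ K) : G.compAvoiding X x ⊆ K := by
  intro y hy
  have h := (reachable_iff_reflTransGen x y).1 (ConnectedComponent.exact hy).symm
  clear hy
  induction h with
  | refl => exact hx
  | tail _ hab ih => exact hK _ ih _ hab

theorem compAvoiding_subset_compAvoiding_union (hxX : x ∉ X) (hxY : x ∉ Y)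
    (h : ∀ a ∈ G.compAvoiding (X ∪ Y) x, ∀ b ∈ Y, ¬ (G.isolateVerts X).Adj a b) :
    G.compAvoiding X x ⊆ G.compAvoiding (X ∪ Y) x := by
  refine compAvoiding_subset mem_compAvoiding_self fun a ha b hab => ?_
  have haXY := Set.disjoint_left.1 (disjoint_compAvoiding fun h => h.elim hxX hxY) ha
  exact mem_compAvoiding_of_adj ha hab.1 haXY
    fun hb => hb.elim hab.2.2 fun hbY => h a ha b hbY hab

theorem ncard_compAvoiding_lt [Finite V] {a b c p : V} (hca : c ≠ a) (hcb : c ≠ b)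
    (hp : p ∉ ({a, b} : Set V)) (hcp : G.Adj c p) (hcX : c ∈ X) (hpX : p ∉ X)
    (hdisj : Disjoint (G.compAvoiding X p) {a, b}) :
    (G.compAvoiding X p).ncard < (G.compAvoiding {a, b} c).ncard := by
  have hc : c ∉ ({a, b} : Set V) := by simp [hca, hcb]
  have hsub : G.compAvoiding X p ⊆ G.compAvoiding {a, b} c := by
    rw [compAvoiding_eq_of_adj ⟨hcp, hc, hp⟩]
    exact subset_compAvoiding connected_induce_compAvoiding hdisj mem_compAvoiding_self
  exact Set.ncard_lt_ncard (Set.ssubset_iff_exists.2 ⟨hsub, c, mem_compAvoiding_self,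
    fun h => Set.disjoint_left.1 (disjoint_compAvoiding hpX) h hcX⟩)

end Components

section Contraction

variable [DecidableEq V]

/-- Contraction of the edge `xy` into `y`. Vertices keep their names: `x` becomes isolated and
`Function.update id x y` is the quotient map. -/
def contract (G : SimpleGraph V) (x y : V) : SimpleGraph V :=
  fromRel fun a b => ∃ a' b', G.Adj a' b' ∧ Function.update id x y a' = a ∧
    Function.update id x y b' = b

variable {G : SimpleGraph V} {x y : V}

local notation "σ" => Function.update (id : V → V) x y

theorem contract_adj_update {a b : V} (h : G.Adj a b) (hne : σ a ≠ σ b) :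
    (G.contract x y).Adj (σ a) (σ b) :=
  (fromRel_adj _ _ _).2 ⟨hne, .inl ⟨a, b, h, rfl, rfl⟩⟩

theorem exists_adj_of_contract_adj {a b : V} (h : (G.contract x y).Adj a b) :
    ∃ a' b', G.Adj a' b' ∧ σ a' = a ∧ σ b' = b := by
  obtain ⟨-, h' | ⟨b', a', h', rfl, rfl⟩⟩ := (fromRel_adj _ _ _).1 h
  · exact h'
  · exact ⟨a', b', h'.symm, rfl, rfl⟩

theorem update_id_ne {a c : V} (ha : a ≠ c) (hy : y ≠ c) : σ a ≠ c := by
  by_cases hax : a = x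
  · simpa [hax] using hy
  · simpa [Function.update_of_ne hax] using ha

theorem eq_or_of_update_id_eq {a b : V} (h : σ a = σ b) :
    a = b ∨ (a = x ∧ b = y) ∨ (a = y ∧ b = x) := by
  simp only [Function.update_apply, id] at h
  split_ifs at h <;> simp_all

theorem contract_adj_of_ne {a b : V} (h : G.Adj a b) (ha : a ≠ x) (hb : b ≠ x) :
    (G.contract x y).Adj a b := by
  have hσ : σ a = a ∧ σ b = b := ⟨Function.update_of_ne ha _ _, Function.update_of_ne hb _ _⟩
  have := contract_adj_update (x := x) (y := y) h (by rw [hσ.1, hσ.2]; exact h.ne)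
  rwa [hσ.1, hσ.2] at this

theorem not_contract_adj_left (hxy : x ≠ y) (b : V) : ¬ (G.contract x y).Adj x b := fun h => by
  obtain ⟨a, _, _, h', _⟩ := exists_adj_of_contract_adj h
  by_cases hax : a = x
  · rw [hax, Function.update_self] at h'
    exact hxy h'.symm
  · exact update_id_ne hax hxy.symm h'

theorem support_contract_subset (hxy : G.Adj x y) :
    (G.contract x y).support ⊆ G.support \ {x} := by
  rintro a ⟨b, hab⟩
  refine ⟨?_, fun h => not_contract_adj_left hxy.ne b (h ▸ hab)⟩
  obtain ⟨a', b', h, rfl, -⟩ := exists_adj_of_contract_adj hab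
  by_cases ha' : a' = x
  · subst ha'
    exact ⟨a', by simpa using hxy.symm⟩
  · exact ⟨b', by simpa [Function.update_of_ne ha'] using h⟩

theorem connected_induce_preimage_of_contract (hxy : G.Adj x y) {s : Set V} (hx : x ∉ s)
    (hs : ((G.contract x y).induce s).Connected) : (G.induce (σ ⁻¹' s)).Connected := by
  have hst : s ⊆ σ ⁻¹' s := fun a ha => by
    simpa [Function.update_of_ne (ne_of_mem_of_not_mem ha hx)] using ha
  have hback : ∀ a (ha : a ∈ σ ⁻¹' s), (G.induce (σ ⁻¹' s)).Reachable ⟨σ a, hst ha⟩ ⟨a, ha⟩ := by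
    intro a ha
    by_cases hax : a = x
    · subst hax
      refine Adj.reachable (?_ : G.Adj _ _)
      simpa using hxy.symm
    · simp only [Function.update_of_ne hax, id]
      rfl
  have hlift : ∀ a b : s, ((G.contract x y).induce s).Reachable a b →
      (G.induce (σ ⁻¹' s)).Reachable ⟨a, hst a.2⟩ ⟨b, hst b.2⟩ := by
    intro a b hab
    rw [reachable_iff_reflTransGen] at hab ⊢
    refine Relation.ReflTransGen.lift' (fun a : s => (⟨a, hst a.2⟩ : σ ⁻¹' s)) ?_ _ _ hab
    rintro ⟨_, ha⟩ ⟨_, hb⟩ h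
    obtain ⟨a', b', h', rfl, rfl⟩ := exists_adj_of_contract_adj h
    have h'' : (G.induce (σ ⁻¹' s)).Adj ⟨a', ha⟩ ⟨b', hb⟩ := h'
    exact (reachable_iff_reflTransGen _ _).1 <|
      ((hback a' ha).trans h''.reachable).trans (hback b' hb).symm
  obtain ⟨a₀⟩ := hs.nonempty
  refine (connected_iff_exists_forall_reachable _).2 ⟨⟨a₀, hst a₀.2⟩, fun b => ?_⟩
  exact (hlift a₀ ⟨σ b, b.2⟩ (hs.preconnected _ _)).trans (hback b b.2)

theorem IsMinorModel.of_contract {H : SimpleGraph W} {f : W → Set V} (hxy : G.Adj x y)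
    (hH : ∀ w, ∃ w', H.Adj w w') (hf : IsMinorModel H (G.contract x y) f) :
    IsMinorModel H G fun w => σ ⁻¹' f w := by
  have hx := hf.notMem_of_forall_not_adj hH (not_contract_adj_left hxy.ne)
  refine ⟨fun w => ?_, fun w => connected_induce_preimage_of_contract hxy (hx w) (hf.connected w),
    fun _ _ h => (hf.disjoint h).preimage _, fun _ _ h => ?_⟩
  · obtain ⟨a, ha⟩ := hf.nonempty w
    exact ⟨a, by simpa [Function.update_of_ne (ne_of_mem_of_not_mem ha (hx w))] using ha⟩
  · obtain ⟨_, ha, _, hb, hab⟩ := hf.adj h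
    obtain ⟨a', b', h', rfl, rfl⟩ := exists_adj_of_contract_adj hab
    exact ⟨a', ha, b', hb, h'⟩

theorem IsMinor.of_contract {H : SimpleGraph W} (hxy : G.Adj x y) (hH : ∀ w, ∃ w', H.Adj w w')
    (h : H.IsMinor (G.contract x y)) : H.IsMinor G :=
  let ⟨_, hf⟩ := isMinor_iff_exists_isMinorModel.1 h
  isMinor_iff_exists_isMinorModel.2 ⟨_, hf.of_contract hxy hH⟩

theorem three_le_ncard_neighborSet_contract [Finite V] (hxy : G.Adj x y)
    (hno : ∀ z, G.Adj y z → ¬ G.Adj z x) (hdeg : ∀ a ∈ G.support, 3 ≤ (G.neighborSet a).ncard)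
    {a : V} (ha : a ∈ (G.contract x y).support) :
    3 ≤ ((G.contract x y).neighborSet a).ncard := by
  obtain ⟨haG, hax⟩ : a ∈ G.support ∧ a ≠ x := support_contract_subset hxy ha
  obtain rfl | hya := eq_or_ne y a
  · have hsub : G.neighborSet y \ {x} ∪ G.neighborSet x \ {y} ⊆
        (G.contract x y).neighborSet y := by
      rintro b (⟨hb, hbx⟩ | ⟨hb, hby⟩)
      · exact contract_adj_of_ne hb hax hbx
      · have hσ : σ b = b := Function.update_of_ne (G.ne_of_adj hb).symm _ _
        have := contract_adj_update (x := x) (y := y) hb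
          (by rw [hσ, Function.update_self]; exact Ne.symm hby)
        rwa [hσ, Function.update_self] at this
    have hdisj : Disjoint (G.neighborSet y \ {x}) (G.neighborSet x \ {y}) :=
      Set.disjoint_left.2 fun b hb hb' => hno b hb.1 (G.adj_symm hb'.1)
    have := Set.ncard_sdiff_singleton_of_mem (show x ∈ G.neighborSet y from hxy.symm)
    have := Set.ncard_sdiff_singleton_of_mem (show y ∈ G.neighborSet x from hxy)
    have := Set.ncard_union_eq hdisj
    have := Set.ncard_le_ncard hsub
    have := hdeg y haG
    have := hdeg x ⟨y, hxy⟩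
    omega
  · have hσa : σ a = a := Function.update_of_ne hax _ _
    refine (hdeg a haG).trans (Set.ncard_le_ncard_of_injOn σ (fun b hb => ?_) ?_)
    · have hne : σ a ≠ σ b := by
        by_cases hbx : b = x
        · simpa [hbx, hσa] using hya.symm
        · simpa [Function.update_of_ne hbx, hσa] using G.ne_of_adj hb
      simpa [hσa] using contract_adj_update hb hne
    · intro b₁ hb₁ b₂ hb₂ h
      rcases eq_or_of_update_id_eq h with h | ⟨rfl, rfl⟩ | ⟨rfl, rfl⟩
      · exact h
      · exact absurd hb₁ (hno a (G.adj_symm hb₂))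
      · exact absurd hb₂ (hno a (G.adj_symm hb₁))

end Contraction

section CompleteGraphFour

variable {G : SimpleGraph V}

theorem exists_adj_ne_ne {c : V} (h : 3 ≤ (G.neighborSet c).ncard) (a b : V) :
    ∃ p, G.Adj c p ∧ p ≠ a ∧ p ≠ b := by
  have hab : ({a, b} : Set V).ncard < (G.neighborSet c).ncard :=
    (Set.ncard_insert_le a {b}).trans_lt (by rw [Set.ncard_singleton]; omega)
  obtain ⟨p, hp, hpab⟩ := Set.exists_mem_notMem_of_ncard_lt_ncard hab
  simp only [Set.mem_insert_iff, Set.mem_singleton_iff, not_or] at hpab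
  exact ⟨p, hp, hpab⟩

variable [Finite V] {a b c p q : V}

theorem ncard_compAvoiding_lt_of_adj_of_not_isMinor
    (hK4 : ¬ (completeGraph (Fin 4)).IsMinor G) (hab : G.Adj a b) (hbc : G.Adj b c)
    (hca : G.Adj c a) (hcp : G.Adj c p) (hpa : G.Adj p a) (hpb : p ≠ b) :
    (G.compAvoiding {a, c} p).ncard < (G.compAvoiding {a, b} c).ncard := by
  set D := G.compAvoiding ({a, c} ∪ {b}) p
  have hp : p ∉ ({a, c} : Set V) := by simp [hpa.ne, hcp.ne']
  have hD : Disjoint D ({a, c} ∪ {b}) := disjoint_compAvoiding (by simp [hpa.ne, hcp.ne', hpb])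
  by_cases hDb : ∃ d ∈ D, G.Adj d b
  · refine absurd (completeGraph_succ_isMinor (g := ![a, c, b]) (B := D) ?_
      ⟨p, mem_compAvoiding_self⟩ connected_induce_compAvoiding (fun i => ?_) (fun i => ?_)) hK4
    · intro i j hij
      fin_cases i <;> fin_cases j <;> simp_all [G.adj_comm]
    · fin_cases i <;> exact fun h => Set.disjoint_left.1 hD h (by simp)
    · obtain ⟨d, hd, hdb⟩ := hDb
      fin_cases i
      exacts [⟨p, mem_compAvoiding_self, hpa⟩, ⟨p, mem_compAvoiding_self, hcp.symm⟩,
        ⟨d, hd, hdb⟩]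
  · have hsub := compAvoiding_subset_compAvoiding_union (Y := {b}) hp (by simpa using hpb)
      fun d hd e he h => hDb ⟨d, hd, (Set.mem_singleton_iff.1 he) ▸ h.1⟩
    refine ncard_compAvoiding_lt hca.ne hbc.ne' (by simp [hpa.ne, hpb]) hcp (by simp) hp ?_
    exact (hD.mono_left hsub).mono_right (by simp [Set.insert_subset_iff])

theorem ncard_compAvoiding_lt_of_forall_not_adj (hab : G.Adj a b) (hbc : G.Adj b c)
    (hca : G.Adj c a) (hcp : G.Adj c p) (hpq : G.Adj p q) (hpa : p ≠ a) (hpb : p ≠ b)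
    (hqa : q ≠ a) (hqb : q ≠ b) (hW : ∀ d ∈ G.compAvoiding {c, p, q} a, ¬ G.Adj d p) :
    (G.compAvoiding {c, q} p).ncard < (G.compAvoiding {a, b} c).ncard := by
  set W := G.compAvoiding {c, p, q} a
  have haW : a ∉ ({c, p, q} : Set V) := by simp [hca.ne', hpa.symm, hqa.symm]
  have hbW : b ∈ W := mem_compAvoiding_of_adj mem_compAvoiding_self hab haW
    (by simp [hbc.ne, hpb.symm, hqb.symm])
  have hWX := disjoint_compAvoiding (G := G) haW
  have hp : p ∉ ({c, q} : Set V) := by simp [hcp.ne', hpq.ne]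
  have hpW : p ∉ W := fun h => Set.disjoint_left.1 hWX h (by simp)
  have hexit : ∀ d ∈ G.compAvoiding ({c, q} ∪ W) p, ∀ e ∈ W, ¬ (G.isolateVerts {c, q}).Adj d e := by
    intro d hd e he hde
    have hdW : d ∉ ({c, q} : Set V) ∪ W :=
      Set.disjoint_left.1 (disjoint_compAvoiding fun h => h.elim hp hpW) hd
    obtain rfl | hdp := eq_or_ne d p
    · exact hW e he hde.1.symm
    refine hdW (.inr (mem_compAvoiding_of_adj he hde.1.symm (Set.disjoint_left.1 hWX he) ?_))
    have hdcq := hde.2.1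
    simp only [Set.mem_insert_iff, Set.mem_singleton_iff, not_or] at hdcq ⊢
    exact ⟨hdcq.1, hdp, hdcq.2⟩
  have hsub := compAvoiding_subset_compAvoiding_union hp hpW hexit
  refine ncard_compAvoiding_lt hca.ne hbc.ne' (by simp [hpa, hpb]) hcp (by simp) hp ?_
  refine ((disjoint_compAvoiding fun h => h.elim hp hpW).mono_left hsub).mono_right ?_
  simp [Set.insert_subset_iff, mem_compAvoiding_self, hbW, W]

/-- With `q` a common neighbour of `c` and `p`: either `{a}, {c}, {b}` and the component of `p`
in `G - {a, b, c}`, or `{c}, {p}, {q}` and the component of `a` in `G - {c, p, q}`, form a `K₄`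
model, or one of the triangles `acp`, `cqp`, `cpq` has a smaller component. -/
theorem exists_triangle_ncard_compAvoiding_lt (hK4 : ¬ (completeGraph (Fin 4)).IsMinor G)
    (htri : ∀ x y, G.Adj x y → ∃ z, G.Adj y z ∧ G.Adj z x)
    (hab : G.Adj a b) (hbc : G.Adj b c) (hca : G.Adj c a) (hcp : G.Adj c p) (hpa : p ≠ a)
    (hpb : p ≠ b) : ∃ a' b' c', G.Adj a' b' ∧ G.Adj b' c' ∧ G.Adj c' a' ∧
      (G.compAvoiding {a', b'} c').ncard < (G.compAvoiding {a, b} c).ncard := by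
  obtain ⟨q, hpq, hqc⟩ := htri c p hcp
  obtain rfl | hqa := eq_or_ne q a
  · exact ⟨q, c, p, hca.symm, hcp, hpq,
      ncard_compAvoiding_lt_of_adj_of_not_isMinor hK4 hab hbc hca hcp hpq hpb⟩
  obtain rfl | hqb := eq_or_ne q b
  · refine ⟨q, c, p, hbc, hcp, hpq, ?_⟩
    rw [Set.pair_comm a q]
    exact ncard_compAvoiding_lt_of_adj_of_not_isMinor hK4 hab.symm hca.symm hbc.symm hcp hpq hpa
  have haW : a ∉ ({c, p, q} : Set V) := by simp [hca.ne', hpa.symm, hqa.symm]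
  by_cases hWp : ∃ d ∈ G.compAvoiding {c, p, q} a, G.Adj d p
  · by_cases hWq : ∃ d ∈ G.compAvoiding {c, p, q} a, G.Adj d q
    · refine absurd (completeGraph_succ_isMinor (g := ![c, p, q])
        (B := G.compAvoiding {c, p, q} a) ?_ ⟨a, mem_compAvoiding_self⟩
        connected_induce_compAvoiding (fun i => ?_) (fun i => ?_)) hK4
      · intro i j hij
        fin_cases i <;> fin_cases j <;> simp_all [G.adj_comm]
      · fin_cases i <;> exact fun h => Set.disjoint_left.1 (disjoint_compAvoiding haW) h (by simp)
      · fin_cases i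
        exacts [⟨a, mem_compAvoiding_self, hca.symm⟩, hWp, hWq]
    · refine ⟨c, p, q, hcp, hpq, hqc, ncard_compAvoiding_lt_of_forall_not_adj hab hbc hca
        hqc.symm hpq.symm hqa hqb hpa hpb ?_⟩
      rw [Set.pair_comm q p]
      exact fun d hd h => hWq ⟨d, hd, h⟩
  · exact ⟨c, q, p, hqc.symm, hpq.symm, hcp.symm, ncard_compAvoiding_lt_of_forall_not_adj hab hbc
      hca hcp hpq hpa hpb hqa hqb fun d hd h => hWp ⟨d, hd, h⟩⟩

theorem completeGraph_four_isMinor_of_forall_adj_exists_triangle (hedge : ∃ x y, G.Adj x y)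
    (htri : ∀ x y, G.Adj x y → ∃ z, G.Adj y z ∧ G.Adj z x)
    (hdeg : ∀ a b c, G.Adj a b → G.Adj b c → G.Adj c a → ∃ p, G.Adj c p ∧ p ≠ a ∧ p ≠ b) :
    (completeGraph (Fin 4)).IsMinor G := by
  by_contra hK4
  obtain ⟨a, b, hab⟩ := hedge
  obtain ⟨c, hbc, hca⟩ := htri a b hab
  induction hn : (G.compAvoiding {a, b} c).ncard using Nat.strong_induction_on
    generalizing a b c with
  | _ n ih =>
    obtain ⟨p, hcp, hpa, hpb⟩ := hdeg a b c hab hbc hca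
    obtain ⟨a', b', c', hab', hbc', hca', hlt⟩ :=
      exists_triangle_ncard_compAvoiding_lt hK4 htri hab hbc hca hcp hpa hpb
    exact ih _ (hn ▸ hlt) a' b' hab' c' hbc' hca' rfl

theorem completeGraph_four_isMinor (hedge : ∃ x y, G.Adj x y)
    (hdeg : ∀ a ∈ G.support, 3 ≤ (G.neighborSet a).ncard) :
    (completeGraph (Fin 4)).IsMinor G := by
  classical
  induction hn : G.support.ncard using Nat.strong_induction_on generalizing G with
  | _ n ih =>
  by_cases htri : ∀ x y, G.Adj x y → ∃ z, G.Adj y z ∧ G.Adj z x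
  · exact completeGraph_four_isMinor_of_forall_adj_exists_triangle hedge htri
      fun a b c _ _ hca => exists_adj_ne_ne (hdeg c ⟨a, hca⟩) a b
  push Not at htri
  obtain ⟨x, y, hxy, hno⟩ := htri
  obtain ⟨p, hyp, hpx, -⟩ := exists_adj_ne_ne (hdeg y ⟨x, hxy.symm⟩) x x
  refine IsMinor.of_contract hxy exists_completeGraph_adj (ih _ ?_ ⟨y, p, ?_⟩
    (fun a ha => three_le_ncard_neighborSet_contract hxy hno hdeg ha) rfl)
  · exact hn ▸ Set.ncard_lt_ncard ((support_contract_subset hxy).trans_ssubset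
      (Set.sdiff_singleton_ssubset.2 ⟨y, hxy⟩))
  · exact contract_adj_of_ne hyp hxy.ne' hpx

end CompleteGraphFour

section ThreePaths

variable {G : SimpleGraph V} {u v w w' z : V}

/-- A path `u x y v` is recorded as the pair `(x, y)`. -/
def threePaths (G : SimpleGraph V) (u v : V) : Set (V × V) :=
  {p : V × V | p.1 ≠ p.2 ∧ p.1 ≠ v ∧ p.2 ≠ u ∧
    G.Adj u p.1 ∧ G.Adj p.1 p.2 ∧ G.Adj p.2 v}

def threePathsThrough (G : SimpleGraph V) (u v w : V) : Set (V × V) :=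
  {p ∈ G.threePaths u v | p.1 = w ∨ p.2 = w}

theorem mem_support_sdiff_of_mem_threePaths {p : V × V} (hp : p ∈ G.threePaths u v) :
    p.1 ∈ G.support \ {u, v} ∧ p.2 ∈ G.support \ {u, v} := by
  obtain ⟨-, h1v, h2u, hu1, h12, h2v⟩ := hp
  exact ⟨⟨⟨_, h12⟩, by simp [hu1.ne', h1v]⟩, ⟨⟨_, h12.symm⟩, by simp [h2u, h2v.ne]⟩⟩

theorem two_le_ncard_support_sdiff [Finite V] {p : V × V} (hp : p ∈ G.threePaths u v) :
    2 ≤ (G.support \ {u, v}).ncard := by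
  have hp' := mem_support_sdiff_of_mem_threePaths hp
  rw [← Set.ncard_pair hp.1]
  exact Set.ncard_le_ncard (Set.insert_subset hp'.1 (Set.singleton_subset_iff.2 hp'.2))

theorem adj_or_adj_of_mem_threePathsThrough {p : V × V} (hp : p ∈ G.threePathsThrough u v w) :
    G.Adj u w ∨ G.Adj w v := by
  obtain ⟨⟨-, -, -, hu1, -, h2v⟩, rfl | rfl⟩ := hp
  exacts [.inl hu1, .inr h2v]

theorem image_swap_threePathsThrough :
    Prod.swap '' G.threePathsThrough u v w = G.threePathsThrough v u w := by
  ext ⟨a, b⟩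
  simp only [Set.mem_image, Prod.exists, Prod.swap_prod_mk, Prod.mk.injEq, threePathsThrough,
    threePaths, Set.mem_ofPred_eq]
  constructor
  · rintro ⟨b, a, ⟨⟨h1, h2, h3, h4, h5, h6⟩, h7⟩, rfl, rfl⟩
    exact ⟨⟨h1.symm, h3, h2, h6.symm, h5.symm, h4.symm⟩, h7.symm⟩
  · rintro ⟨⟨h1, h2, h3, h4, h5, h6⟩, h7⟩
    exact ⟨b, a, ⟨⟨h1.symm, h3, h2, h6.symm, h5.symm, h4.symm⟩, h7.symm⟩, rfl, rfl⟩

theorem ncard_threePathsThrough_comm :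
    (G.threePathsThrough v u w).ncard = (G.threePathsThrough u v w).ncard := by
  rw [← image_swap_threePathsThrough, Set.ncard_image_of_injective _ Prod.swap_injective]

variable [Finite V]

theorem ncard_threePaths_le_deleteIncidenceSet (hwu : w ≠ u) (hwv : w ≠ v) :
    (G.threePaths u v).ncard ≤
      ((G.deleteIncidenceSet w).threePaths u v).ncard + (G.threePathsThrough u v w).ncard := by
  have hsub : G.threePaths u v \ G.threePathsThrough u v w ⊆
      (G.deleteIncidenceSet w).threePaths u v := by
    rintro ⟨a, b⟩ ⟨hp, hw⟩
    obtain ⟨haw, hbw⟩ : a ≠ w ∧ b ≠ w := by simpa [threePathsThrough, hp, not_or] using hw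
    obtain ⟨h1, h2, h3, h4, h5, h6⟩ := hp
    simp only [threePaths, Set.mem_ofPred_eq, deleteIncidenceSet_adj]
    exact ⟨h1, h2, h3, ⟨h4, hwu.symm, haw⟩, ⟨h5, haw, hbw⟩, ⟨h6, hbw, hwv.symm⟩⟩
  have := Set.ncard_le_ncard hsub
  have := Set.ncard_le_ncard_sdiff_add_ncard (G.threePaths u v) (G.threePathsThrough u v w)
  omega

theorem ncard_threePathsThrough_le_of_not_adj (hwv : ¬ G.Adj w v) :
    (G.threePathsThrough u v w).ncard ≤ {y | G.Adj w y ∧ G.Adj y v ∧ y ≠ u}.ncard := by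
  have hfst : ∀ p ∈ G.threePathsThrough u v w, p.1 = w := by
    rintro p ⟨⟨-, -, -, -, -, h2v⟩, h | rfl⟩
    exacts [h, absurd h2v hwv]
  refine Set.ncard_le_ncard_of_injOn Prod.snd (fun p hp => ?_) ?_
  · obtain ⟨⟨-, -, h2u, -, h12, h2v⟩, -⟩ := id hp
    exact ⟨hfst p hp ▸ h12, h2v, h2u⟩
  · exact fun p hp q hq h => Prod.ext ((hfst p hp).trans (hfst q hq).symm) h

theorem ncard_threePathsThrough_le_ncard_neighborSet
    (hAA : ∀ x, G.Adj u x → G.Adj x v → G.Adj w x → ¬ (G.Adj u w ∧ G.Adj w v)) :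
    (G.threePathsThrough u v w).ncard ≤ ((G.isolateVerts {u, v}).neighborSet w).ncard := by
  classical
  refine Set.ncard_le_ncard_of_injOn (fun p => if p.1 = w then p.2 else p.1) ?_ ?_
  · rintro ⟨a, b⟩ ⟨⟨h12, h1v, h2u, hu1, h12', h2v⟩, rfl | rfl⟩
    · simp [hu1.ne', h1v, h2u, h2v.ne, h12']
    · simp [h12, hu1.ne', h1v, h2u, h2v.ne, h12'.symm]
  · rintro ⟨a, b⟩ ⟨⟨h12, -, -, hua, hab, hbv⟩, hw⟩ ⟨c, d⟩ ⟨⟨h34, -, -, huc, hcd, hdv⟩, hw'⟩ h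
    simp only at hw hw' h
    rcases hw with rfl | rfl <;> rcases hw' with rfl | rfl
    · simp_all
    · simp only [if_neg h34] at h
      subst h
      exact absurd ⟨hua, hdv⟩ (hAA b huc hbv hab)
    · simp only [if_neg h12] at h
      subst h
      exact absurd ⟨huc, hbv⟩ (hAA a hua hdv hcd)
    · simp_all

theorem completeGraph_five_isMinor_of_common_adj (huv : G.Adj u v) (huw : G.Adj u w)
    (hwv : G.Adj w v) (huw' : G.Adj u w') (hw'v : G.Adj w' v) (hww' : G.Adj w w')
    (hzw : G.Adj z w) (hzw' : G.Adj z w') (hz : G.Adj u z ∧ z ≠ v ∨ G.Adj z v ∧ z ≠ u)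
    (hz3 : 3 ≤ (G.threePathsThrough u v z).ncard) : (completeGraph (Fin 5)).IsMinor G := by
  wlog huz : G.Adj u z ∧ z ≠ v generalizing u v
  · refine this huv.symm hwv.symm huw.symm hw'v.symm huw'.symm (by tauto)
      (ncard_threePathsThrough_comm ▸ hz3) ?_
    exact hz.resolve_left huz |>.imp_left G.adj_symm
  obtain ⟨huz, hzv⟩ := huz
  obtain ⟨B, hvB, hBc, hB, y, hyB, hyz⟩ : ∃ B : Set V, v ∈ B ∧ (G.induce B).Connected ∧
      (u ∉ B ∧ w ∉ B ∧ w' ∉ B ∧ z ∉ B) ∧ ∃ y ∈ B, G.Adj y z := by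
    by_cases hzv' : G.Adj z v
    · exact ⟨{v}, rfl, G.connected_induce_singleton v, by simp [huv.ne, hwv.ne, hw'v.ne, hzv],
        v, rfl, hzv'.symm⟩
    have hY := ncard_threePathsThrough_le_of_not_adj (u := u) hzv'
    have hww'2 := Set.ncard_insert_le w {w'}
    rw [Set.ncard_singleton] at hww'2
    obtain ⟨y, ⟨hzy, hyv, hyu⟩, hy⟩ := Set.exists_mem_notMem_of_ncard_lt_ncard
      (s := {w, w'}) (t := {y | G.Adj z y ∧ G.Adj y v ∧ y ≠ u}) (by omega)
    simp only [Set.mem_insert_iff, Set.mem_singleton_iff, not_or] at hy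
    refine ⟨{v, y}, by simp, induce_pair_connected_of_adj hyv.symm, ?_, y, by simp, hzy.symm⟩
    simp [huv.ne, Ne.symm hyu, hwv.ne, Ne.symm hy.1, hw'v.ne, Ne.symm hy.2, hzv, hzy.ne]
  refine completeGraph_succ_isMinor (g := ![u, w, w', z]) (B := B) ?_ ⟨v, hvB⟩ hBc ?_ ?_
  · intro i j hij
    fin_cases i <;> fin_cases j <;> simp_all [G.adj_comm]
  · intro i
    fin_cases i <;> simp [hB]
  · intro i
    fin_cases i
    exacts [⟨v, hvB, huv.symm⟩, ⟨v, hvB, hwv.symm⟩, ⟨v, hvB, hw'v.symm⟩, ⟨y, hyB, hyz⟩]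

theorem completeGraph_five_isMinor_of_three_le (huv : G.Adj u v)
    (hP : (G.threePaths u v).Nonempty)
    (hAA : ∀ a b, G.Adj u a → G.Adj a v → G.Adj u b → G.Adj b v → ¬ G.Adj a b)
    (hbig : ∀ a ∈ G.support \ {u, v}, 3 ≤ (G.threePathsThrough u v a).ncard) :
    (completeGraph (Fin 5)).IsMinor G := by
  set G' := G.isolateVerts {u, v}
  have hsupp : G'.support ⊆ G.support \ {u, v} := fun a ⟨b, hab⟩ => ⟨⟨b, hab.1⟩, hab.2.1⟩
  obtain ⟨p, hp⟩ := hP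
  have hp' := mem_support_sdiff_of_mem_threePaths hp
  obtain ⟨f, hf⟩ := isMinor_iff_exists_isMinorModel.1 <| completeGraph_four_isMinor (G := G')
    ⟨p.1, p.2, hp.2.2.2.2.1, hp'.1.2, hp'.2.2⟩ fun a ha =>
      (hbig a (hsupp ha)).trans (ncard_threePathsThrough_le_ncard_neighborSet
        fun x hux hxv hax ⟨hua, hav⟩ => hAA a x hua hav hux hxv hax)
  have hcons := (hf.mono isolateVerts_le).cons (B := {u, v}) (by simp)
    (induce_pair_connected_of_adj huv) (fun i => ?_) (fun i => ?_)
  · exact isMinor_iff_exists_isMinorModel.2 ⟨_, hcons⟩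
  · refine Set.disjoint_left.2 ?_
    rintro a (rfl | rfl)
    exacts [hf.notMem_of_forall_not_adj exists_completeGraph_adj (fun b h => h.2.1 (by simp)) i,
      hf.notMem_of_forall_not_adj exists_completeGraph_adj (fun b h => h.2.1 (by simp)) i]
  · obtain ⟨j, hij⟩ := exists_completeGraph_adj i
    obtain ⟨a, ha, b, -, hab⟩ := hf.adj hij
    obtain ⟨q, hq⟩ := Set.nonempty_of_ncard_ne_zero (s := G.threePathsThrough u v a)
      (by have := hbig a (hsupp ⟨b, hab⟩); omega)
    rcases adj_or_adj_of_mem_threePathsThrough hq with h | h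
    exacts [⟨u, by simp, a, ha, h⟩, ⟨v, by simp, a, ha, h.symm⟩]

section Contraction

variable [DecidableEq V]

local notation "σ" => Function.update (id : V → V) w w'

/-- Off the two paths through `ww'`, merging `w` into `w'` is injective on paths: a collision
would give a common neighbour of `w` and `w'` adjacent to `u` or `v`. -/
theorem ncard_threePaths_le_contract (huw : G.Adj u w) (hwv : G.Adj w v) (huw' : G.Adj u w')
    (hw'v : G.Adj w' v) (hww' : G.Adj w w')
    (hz : ∀ z, G.Adj z w → G.Adj z w' → (G.Adj u z → z = v) ∧ (G.Adj z v → z = u)) :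
    (G.threePaths u v).ncard ≤ ((G.contract w w').threePaths u v).ncard + 2 := by
  set S : Set (V × V) := {(w, w'), (w', w)}
  have hS : S.ncard ≤ 2 := (Set.ncard_insert_le _ _).trans (by simp)
  have hσu : σ u = u := Function.update_of_ne huw.ne _ _
  have hσv : σ v = v := Function.update_of_ne hwv.ne' _ _
  suffices (G.threePaths u v \ S).ncard ≤ ((G.contract w w').threePaths u v).ncard by
    have := Set.ncard_le_ncard_sdiff_add_ncard (G.threePaths u v) S
    omega
  refine Set.ncard_le_ncard_of_injOn (Prod.map σ σ) ?_ ?_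
  · rintro ⟨a, b⟩ ⟨⟨hab, hav, hbu, hua, hab', hbv⟩, habS⟩
    have hσab : σ a ≠ σ b := by
      intro h
      rcases eq_or_of_update_id_eq h with h | ⟨rfl, rfl⟩ | ⟨rfl, rfl⟩
      exacts [hab h, habS (by simp [S]), habS (by simp [S])]
    refine ⟨hσab, update_id_ne hav hw'v.ne, update_id_ne hbu huw'.ne', ?_,
      contract_adj_update hab' hσab, ?_⟩
    · have := contract_adj_update hua (hσu ▸ (update_id_ne hua.ne' huw'.ne').symm)
      rwa [hσu] at this
    · have := contract_adj_update hbv (hσv ▸ update_id_ne hbv.ne hw'v.ne)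
      rwa [hσv] at this
  · rintro ⟨a, b⟩ ⟨⟨hab, hav, -, hua, hab', hbv⟩, habS⟩ ⟨c, d⟩ ⟨⟨-, -, hdu, -, hcd', -⟩, -⟩ h
    simp only [Prod.map, Prod.mk.injEq] at h
    rcases eq_or_of_update_id_eq h.1 with rfl | ⟨rfl, rfl⟩ | ⟨rfl, rfl⟩ <;>
      rcases eq_or_of_update_id_eq h.2 with rfl | ⟨rfl, rfl⟩ | ⟨rfl, rfl⟩
    · rfl
    · exact absurd ((hz a hab' hcd').1 hua) hav
    · exact absurd ((hz a hcd' hab').1 hua) hav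
    · exact absurd ((hz b hab'.symm hcd'.symm).2 hbv) hdu
    · exact absurd rfl hab
    · exact absurd (by simp [S]) habS
    · exact absurd ((hz b hcd'.symm hab'.symm).2 hbv) hdu
    · exact absurd (by simp [S]) habS
    · exact absurd rfl hab

end Contraction

theorem ncard_sdiff_lt_of_subset_sdiff_singleton {s t X : Set V} {w : V} (h : s ⊆ t \ {w})
    (hw : w ∈ t \ X) : (s \ X).ncard < (t \ X).ncard :=
  Set.ncard_lt_ncard (Set.ssubset_iff_exists.2
    ⟨fun _ ha => ⟨(h ha.1).1, ha.2⟩, w, hw, fun hw' => (h hw'.1).2 rfl⟩)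

theorem ncard_threePaths_le (hG : ¬ (completeGraph (Fin 5)).IsMinor G) (huv : G.Adj u v) :
    (G.threePaths u v).ncard ≤ 2 * ((G.support \ {u, v}).ncard - 1) := by
  classical
  induction hn : (G.support \ {u, v}).ncard using Nat.strong_induction_on generalizing G with
  | _ n ih =>
  obtain hP | ⟨p, hp⟩ := (G.threePaths u v).eq_empty_or_nonempty
  · simp [hP]
  have hn2 := hn ▸ two_le_ncard_support_sdiff hp
  by_cases hsmall : ∃ w ∈ G.support \ {u, v}, (G.threePathsThrough u v w).ncard ≤ 2
  · obtain ⟨w, hw, hw2⟩ := hsmall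
    have hwuv : w ≠ u ∧ w ≠ v := by simpa [not_or] using hw.2
    have hlt := hn ▸ ncard_sdiff_lt_of_subset_sdiff_singleton
      (support_deleteIncidenceSet_subset G w) hw
    have := ih _ hlt (fun h => hG (h.mono (deleteIncidenceSet_le G w)))
      (deleteIncidenceSet_adj.2 ⟨huv, hwuv.1.symm, hwuv.2.symm⟩) rfl
    have := ncard_threePaths_le_deleteIncidenceSet (G := G) hwuv.1 hwuv.2
    omega
  push Not at hsmall
  by_cases hAA : ∃ w w', G.Adj u w ∧ G.Adj w v ∧ G.Adj u w' ∧ G.Adj w' v ∧ G.Adj w w'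
  · obtain ⟨w, w', huw, hwv, huw', hw'v, hww'⟩ := hAA
    by_cases hz : ∃ z, G.Adj z w ∧ G.Adj z w' ∧ (G.Adj u z ∧ z ≠ v ∨ G.Adj z v ∧ z ≠ u)
    · obtain ⟨z, hzw, hzw', hz⟩ := hz
      have hzS : z ∈ G.support \ {u, v} := ⟨⟨w, hzw⟩, by
        rcases hz with ⟨huz, hzv⟩ | ⟨hzv, hzu⟩
        exacts [by simp [huz.ne', hzv], by simp [hzu, hzv.ne]]⟩
      exact absurd (completeGraph_five_isMinor_of_common_adj huv huw hwv huw' hw'v hww' hzw hzw'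
        hz (hsmall z hzS)) hG
    push Not at hz
    have hw : w ∈ G.support \ {u, v} := ⟨⟨w', hww'⟩, by simp [huw.ne', hwv.ne]⟩
    have hlt := hn ▸ ncard_sdiff_lt_of_subset_sdiff_singleton (support_contract_subset hww') hw
    have := ih _ hlt (fun h => hG (h.of_contract hww' exists_completeGraph_adj))
      (contract_adj_of_ne huv huw.ne hwv.ne') rfl
    have := ncard_threePaths_le_contract huw hwv huw' hw'v hww' hz
    omega
  · push Not at hAA
    exact absurd (completeGraph_five_isMinor_of_three_le huv ⟨p, hp⟩
      (fun a b hua hav hub hbv => hAA a b hua hav hub hbv) hsmall) hG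

end ThreePaths

end SimpleGraph

theorem paths_of_length_three_le_general {V : Type*} [Fintype V] (G : SimpleGraph V)
    (k : ℕ) (hcard : Fintype.card V = k)
    (hG : G.IsPlanar) (u v : V) (huv : G.Adj u v) :
    {p : V × V | p.1 ≠ p.2 ∧ p.1 ≠ v ∧ p.2 ≠ u ∧
      G.Adj u p.1 ∧ G.Adj p.1 p.2 ∧ G.Adj p.2 v}.ncard ≤ 2 * (k - 3) := by
  have hS : (G.support \ {u, v}).ncard ≤ k - 2 := by
    have := Set.ncard_le_ncard (Set.sdiff_subset_sdiff_left (Set.subset_univ G.support) :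
      G.support \ {u, v} ⊆ Set.univ \ {u, v})
    rwa [Set.ncard_sdiff (Set.subset_univ _), Set.ncard_univ, Nat.card_eq_fintype_card, hcard,
      Set.ncard_pair huv.ne] at this
  exact (G.ncard_threePaths_le hG.1 huv).trans (by omega)

/-- If `G` is a planar graph on `k ≥ 3` vertices and `{u, v}` is an edge of `G`, then the
number of paths of length three from `u` to `v` (4 distinct vertices `u, x, y, v` with
`{u,x}`, `{x,y}`, `{y,v}` edges; each such path is determined by the ordered pair
`(x, y)` of internal vertices) is at most `2(k − 3)`. -/
theorem paths_of_length_three_le {V : Type*} [Fintype V] (G : SimpleGraph V)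
    (k : ℕ) (hk : 3 ≤ k) (hcard : Fintype.card V = k)
    (hG : G.IsPlanar) (u v : V) (huv : G.Adj u v) :
    {p : V × V | p.1 ≠ p.2 ∧ p.1 ≠ v ∧ p.2 ≠ u ∧
      G.Adj u p.1 ∧ G.Adj p.1 p.2 ∧ G.Adj p.2 v}.ncard ≤ 2 * (k - 3) :=
  paths_of_length_three_le_general G k hcard hG u v huv
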